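/- arXiv:2306.05700 — 8 statements merged into one kernel-verified Lean document; each statement's English description precedes it below -/
import Mathlib

section
/- There exists a unique function Q* : S × A × B → ℝ satisfying the minimax optimal Bellman equation Q*(s,a,b) = R(s,a,b) + γ · Σ_{s'∈S} P(s'|s,a,b) · max_{a'∈A} min_{b'∈B} Q*(s',a',b') for all (s,a,b) ∈ S × A × B; that is, F has a unique fixed point. -/
/-!
The operator `F` is a `γ`-contraction for the sup distance: a max–min over finitely many
values moves by at most the largest change of those values, and averaging against the
probability vector `P x` does not increase that bound. Banach's fixed point theorem on the
complete space `S × A × B → ℝ` then gives existence and uniqueness of the fixed point.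
-/

open Finset Function

namespace Finset

variable {ι M : Type*} [AddCommGroup M] [LinearOrder M]
  {s : Finset ι} (hs : s.Nonempty) {f g : ι → M} {c : M}

theorem sup'_le_sup'_add [IsOrderedAddMonoid M] (h : ∀ i ∈ s, f i ≤ g i + c) :
    s.sup' hs f ≤ s.sup' hs g + c :=
  sup'_le _ _ fun i hi => (h i hi).trans (add_le_add_left (le_sup' g hi) c)

theorem inf'_le_inf'_add (h : ∀ i ∈ s, f i ≤ g i + c) : s.inf' hs f ≤ s.inf' hs g + c := by
  obtain ⟨i, hi, hgi⟩ := exists_mem_eq_inf' hs g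
  rw [hgi]
  exact (inf'_le f hi).trans (h i hi)

theorem abs_sup'_sub_sup'_le [IsOrderedAddMonoid M] (h : ∀ i ∈ s, |f i - g i| ≤ c) :
    |s.sup' hs f - s.sup' hs g| ≤ c := by
  simp only [abs_sub_le_iff, sub_le_iff_le_add'] at h ⊢
  exact ⟨sup'_le_sup'_add hs fun i hi => (h i hi).1, sup'_le_sup'_add hs fun i hi => (h i hi).2⟩

theorem abs_inf'_sub_inf'_le [IsOrderedAddMonoid M] (h : ∀ i ∈ s, |f i - g i| ≤ c) :
    |s.inf' hs f - s.inf' hs g| ≤ c := by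
  simp only [abs_sub_le_iff, sub_le_iff_le_add'] at h ⊢
  exact ⟨inf'_le_inf'_add hs fun i hi => (h i hi).1, inf'_le_inf'_add hs fun i hi => (h i hi).2⟩

theorem abs_sum_mul_le_of_sum_eq_one {p u : ι → ℝ} {c : ℝ} (hp0 : ∀ i ∈ s, 0 ≤ p i)
    (hp1 : ∑ i ∈ s, p i = 1) (hu : ∀ i ∈ s, |u i| ≤ c) : |∑ i ∈ s, p i * u i| ≤ c :=
  calc |∑ i ∈ s, p i * u i|
      _ ≤ ∑ i ∈ s, |p i * u i| := abs_sum_le_sum_abs _ _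
      _ ≤ ∑ i ∈ s, p i * c := sum_le_sum fun i hi => by
        rw [abs_mul, abs_of_nonneg (hp0 i hi)]
        exact mul_le_mul_of_nonneg_left (hu i hi) (hp0 i hi)
      _ = c := by rw [← sum_mul, hp1, one_mul]

end Finset

theorem ContractingWith.existsUnique_isFixedPt {α : Type*} [MetricSpace α] [Nonempty α]
    [CompleteSpace α] {K : NNReal} {f : α → α} (hf : ContractingWith K f) :
    ∃! x, IsFixedPt f x :=
  ⟨fixedPoint f hf, hf.fixedPoint_isFixedPt, fun _ hx => hf.fixedPoint_unique hx⟩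

section Bellman

variable {S A B : Type*} [Fintype A] [Fintype B] [Nonempty A] [Nonempty B]

noncomputable def maxMin (Q : S × A × B → ℝ) (s : S) : ℝ :=
  univ.sup' univ_nonempty fun a => univ.inf' univ_nonempty fun b => Q (s, a, b)

noncomputable def bellmanOp [Fintype S] (P : S × A × B → S → ℝ) (R : S × A × B → ℝ) (γ : ℝ)
    (Q : S × A × B → ℝ) : S × A × B → ℝ :=
  fun x => R x + γ * ∑ s', P x s' * maxMin Q s'

theorem abs_maxMin_sub_maxMin_le [Fintype S] (Q Q' : S × A × B → ℝ) (s : S) :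
    |maxMin Q s - maxMin Q' s| ≤ dist Q Q' :=
  abs_sup'_sub_sup'_le _ fun a _ => abs_inf'_sub_inf'_le _ fun b _ =>
    (Real.dist_eq _ _).symm.trans_le (dist_le_pi_dist Q Q' (s, a, b))

variable [Fintype S] {P : S × A × B → S → ℝ} {R : S × A × B → ℝ} {γ : ℝ}

theorem dist_bellmanOp_le (hP0 : ∀ x s', 0 ≤ P x s') (hP1 : ∀ x, ∑ s', P x s' = 1)
    (hγ0 : 0 ≤ γ) (Q Q' : S × A × B → ℝ) :
    dist (bellmanOp P R γ Q) (bellmanOp P R γ Q') ≤ γ * dist Q Q' := by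
  refine (dist_pi_le_iff (by positivity)).2 fun x => ?_
  have hdiff : bellmanOp P R γ Q x - bellmanOp P R γ Q' x =
      γ * ∑ s', P x s' * (maxMin Q s' - maxMin Q' s') := by
    simp only [bellmanOp, mul_sub, sum_sub_distrib]
    ring
  rw [Real.dist_eq, hdiff, abs_mul, abs_of_nonneg hγ0]
  gcongr
  exact abs_sum_mul_le_of_sum_eq_one (fun s' _ => hP0 x s') (hP1 x)
    fun s' _ => abs_maxMin_sub_maxMin_le Q Q' s'

theorem contractingWith_bellmanOp (hP0 : ∀ x s', 0 ≤ P x s') (hP1 : ∀ x, ∑ s', P x s' = 1)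
    (hγ0 : 0 ≤ γ) (hγ1 : γ < 1) : ContractingWith ⟨γ, hγ0⟩ (bellmanOp P R γ) :=
  ⟨hγ1, LipschitzWith.of_dist_le_mul (dist_bellmanOp_le hP0 hP1 hγ0)⟩

end Bellman

theorem bellman_unique_fixed_point_general {S A B : Type*}
    [Fintype S] [Fintype A] [Fintype B] [Nonempty A] [Nonempty B]
    (P : S × A × B → S → ℝ) (hP0 : ∀ x s', 0 ≤ P x s') (hP1 : ∀ x, ∑ s' : S, P x s' = 1)
    (R : S × A × B → ℝ) (γ : ℝ) (hγ0 : 0 ≤ γ) (hγ1 : γ < 1) :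
    ∃! Qstar : S × A × B → ℝ, ∀ x : S × A × B,
      Qstar x = R x + γ * ∑ s' : S, P x s' *
        (Finset.univ.sup' Finset.univ_nonempty fun a' : A =>
          Finset.univ.inf' Finset.univ_nonempty fun b' : B => Qstar (s', a', b')) := by
  have isFixedPt_iff (Q : S × A × B → ℝ) :
      IsFixedPt (bellmanOp P R γ) Q ↔ ∀ x, Q x = bellmanOp P R γ Q x :=
    funext_iff.trans (forall_congr' fun _ => eq_comm)
  simpa only [isFixedPt_iff, bellmanOp, maxMin] using
    (contractingWith_bellmanOp (R := R) hP0 hP1 hγ0 hγ1).existsUnique_isFixedPt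

theorem bellman_unique_fixed_point {S A B : Type*}
    [Fintype S] [Fintype A] [Fintype B] [Nonempty S] [Nonempty A] [Nonempty B]
    (P : S × A × B → S → ℝ) (hP0 : ∀ x s', 0 ≤ P x s') (hP1 : ∀ x, ∑ s' : S, P x s' = 1)
    (R : S × A × B → ℝ) (γ : ℝ) (hγ0 : 0 ≤ γ) (hγ1 : γ < 1) :
    ∃! Qstar : S × A × B → ℝ, ∀ x : S × A × B,
      Qstar x = R x + γ * ∑ s' : S, P x s' *
        (Finset.univ.sup' Finset.univ_nonempty fun a' : A =>
          Finset.univ.inf' Finset.univ_nonempty fun b' : B => Qstar (s', a', b')) :=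
  bellman_unique_fixed_point_general P hP0 hP1 R γ hγ0 hγ1
end

section
/- Let Q* : S × A × B → ℝ satisfy Q* = F Q* and let Q : S × A × B → ℝ be arbitrary. Let μ* : S × A → B satisfy that μ*(s,a) minimizes b ↦ Q*(s,a,b) for every (s,a), and let τ : S → A satisfy that τ(s) maximizes a ↦ Q(s,a,μ*(s,a)) for every s. Then for every (s,a,b) ∈ S × A × B: (F Q)(s,a,b) − Q*(s,a,b) ≤ γ · Σ_{s'∈S} P(s'|s,a,b) · ( Q(s', τ(s'), μ*(s', τ(s'))) − Q*(s', τ(s'), μ*(s', τ(s'))) ). -/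
/-!
Since `Q* = F Q*`, the difference `F Q - Q*` at `x` is `γ` times the `P x`-average of the
differences of max-min values at the next state `s'`. There, the max-min value of `Q` is at most
`Q (s', τ s', μ* (s', τ s'))`, because `μ*` is one choice for the minimizing player and `τ`
maximizes against it; the max-min value of `Q*` is at least `Q* (s', τ s', μ* (s', τ s'))`,
because `μ*` attains the inner minimum of `Q*`.
-/

/-- The minimax optimal Bellman operator for a two-player zero-sum Markov game. -/
noncomputable def minimaxBellman {S A B : Type*} [Fintype S] [Fintype A] [Fintype B]
    [Nonempty A] [Nonempty B] (P : S × A × B → S → ℝ) (R : S × A × B → ℝ) (γ : ℝ)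
    (Q : S × A × B → ℝ) : S × A × B → ℝ := fun x =>
  R x + γ * ∑ s' : S, P x s' *
    (Finset.univ.sup' Finset.univ_nonempty fun a' : A =>
      Finset.univ.inf' Finset.univ_nonempty fun b' : B => Q (s', a', b'))

open Finset

noncomputable def maxMinValue {S A B : Type*} [Fintype A] [Fintype B] [Nonempty A] [Nonempty B]
    (Q : S × A × B → ℝ) (s : S) : ℝ :=
  univ.sup' univ_nonempty fun a => univ.inf' univ_nonempty fun b => Q (s, a, b)

section

variable {S A B : Type*} [Fintype A] [Fintype B] [Nonempty A] [Nonempty B]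

theorem maxMinValue_le_of_maximizer (Q : S × A × B → ℝ) (μ : S × A → B) (τ : S → A)
    (hτ : ∀ s a, Q (s, a, μ (s, a)) ≤ Q (s, τ s, μ (s, τ s))) (s : S) :
    maxMinValue Q s ≤ Q (s, τ s, μ (s, τ s)) :=
  sup'_le _ _ fun a _ => (inf'_le _ (mem_univ _)).trans (hτ s a)

theorem le_maxMinValue_of_minimizer (Q : S × A × B → ℝ) (μ : S × A → B)
    (hμ : ∀ s a b, Q (s, a, μ (s, a)) ≤ Q (s, a, b)) (s : S) (a : A) :
    Q (s, a, μ (s, a)) ≤ maxMinValue Q s :=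
  (le_inf' _ _ fun b _ => hμ s a b).trans
    (le_sup' (fun a => univ.inf' univ_nonempty fun b => Q (s, a, b)) (mem_univ a))

variable [Fintype S]

theorem minimaxBellman_eq (P : S × A × B → S → ℝ) (R : S × A × B → ℝ) (γ : ℝ)
    (Q : S × A × B → ℝ) (x : S × A × B) :
    minimaxBellman P R γ Q x = R x + γ * ∑ s', P x s' * maxMinValue Q s' :=
  rfl

theorem minimaxBellman_sub_le {P : S × A × B → S → ℝ} (hP0 : ∀ x s', 0 ≤ P x s')
    (R : S × A × B → ℝ) {γ : ℝ} (hγ0 : 0 ≤ γ) {Q Q' : S × A × B → ℝ} {d : S → ℝ}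
    (hd : ∀ s', maxMinValue Q s' - maxMinValue Q' s' ≤ d s') (x : S × A × B) :
    minimaxBellman P R γ Q x - minimaxBellman P R γ Q' x ≤ γ * ∑ s', P x s' * d s' := by
  have hdiff : minimaxBellman P R γ Q x - minimaxBellman P R γ Q' x
      = γ * ∑ s', P x s' * (maxMinValue Q s' - maxMinValue Q' s') := by
    simp only [minimaxBellman_eq, mul_sub, sum_sub_distrib]
    ring
  rw [hdiff]
  gcongr with s' _
  exacts [hP0 x s', hd s']

end

theorem bellman_upper_bound_general {S A B : Type*}
    [Fintype S] [Fintype A] [Fintype B] [Nonempty A] [Nonempty B]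
    (P : S × A × B → S → ℝ) (hP0 : ∀ x s', 0 ≤ P x s')
    (R : S × A × B → ℝ) (γ : ℝ) (hγ0 : 0 ≤ γ)
    (Qstar : S × A × B → ℝ) (hQstar : minimaxBellman P R γ Qstar = Qstar)
    (Q : S × A × B → ℝ)
    (μstar : S × A → B) (hμstar : ∀ s a b, Qstar (s, a, μstar (s, a)) ≤ Qstar (s, a, b))
    (τ : S → A) (hτ : ∀ s a, Q (s, a, μstar (s, a)) ≤ Q (s, τ s, μstar (s, τ s))) :
    ∀ x : S × A × B,
      minimaxBellman P R γ Q x - Qstar x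
      ≤ γ * ∑ s' : S, P x s' *
        (Q (s', τ s', μstar (s', τ s')) - Qstar (s', τ s', μstar (s', τ s'))) := by
  intro x
  have hbound := minimaxBellman_sub_le hP0 R hγ0 (fun s' => sub_le_sub
    (maxMinValue_le_of_maximizer Q μstar τ hτ s')
    (le_maxMinValue_of_minimizer Qstar μstar hμstar s' (τ s'))) x
  rwa [hQstar] at hbound

theorem bellman_upper_bound {S A B : Type*}
    [Fintype S] [Fintype A] [Fintype B] [Nonempty S] [Nonempty A] [Nonempty B]
    (P : S × A × B → S → ℝ) (hP0 : ∀ x s', 0 ≤ P x s') (hP1 : ∀ x, ∑ s' : S, P x s' = 1)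
    (R : S × A × B → ℝ) (γ : ℝ) (hγ0 : 0 ≤ γ) (hγ1 : γ < 1)
    (Qstar : S × A × B → ℝ) (hQstar : minimaxBellman P R γ Qstar = Qstar)
    (Q : S × A × B → ℝ)
    (μstar : S × A → B) (hμstar : ∀ s a b, Qstar (s, a, μstar (s, a)) ≤ Qstar (s, a, b))
    (τ : S → A) (hτ : ∀ s a, Q (s, a, μstar (s, a)) ≤ Q (s, τ s, μstar (s, τ s))) :
    ∀ x : S × A × B,
      minimaxBellman P R γ Q x - Qstar x
      ≤ γ * ∑ s' : S, P x s' *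
        (Q (s', τ s', μstar (s', τ s')) - Qstar (s', τ s', μstar (s', τ s'))) :=
  bellman_upper_bound_general P hP0 R γ hγ0 Qstar hQstar Q μstar hμstar τ hτ
end

section
/- Consider the lower comparison system (Q_k^L) and the lower-upper comparison system (Q_k^{LU}) driven by the same noise sequence (w_k). If Q_0^L(s,a,b) ≤ Q_0^{LU}(s,a,b) for all (s,a,b) ∈ S × A × B, then Q_k^L(s,a,b) ≤ Q_k^{LU}(s,a,b) for all k ≥ 0 and all (s,a,b) ∈ S × A × B. -/
/-!
Both recursions are the same monotone affine update of the error `Q - Q*` (the weights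
`1 - α d`, `α d γ` and `P` are nonnegative), driven by the same noise. They differ only in the
adversary action read off at the next state, and since `ν k` minimizes the lower error there, the
lower system reads off a value no larger than the one at `μ*`. Induction on `k` finishes.
-/

theorem relaxation_step_mono {ι : Type*} [Fintype ι] {c β u u' n : ℝ} {p g g' : ι → ℝ}
    (hc0 : 0 ≤ c) (hc1 : c ≤ 1) (hβ : 0 ≤ β) (hp : ∀ i, 0 ≤ p i) (hu : u ≤ u')
    (hg : ∀ i, g i ≤ g' i) :
    (1 - c) * u + c * β * ∑ i, p i * g i + n ≤ (1 - c) * u' + c * β * ∑ i, p i * g' i + n := by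
  have hc : 0 ≤ 1 - c := sub_nonneg.2 hc1
  gcongr with i
  · exact hp i
  · exact hg i

theorem lower_upper_comparison_system_bounds_lower_general {S A B : Type*}
    [Fintype S]
    (P : S × A × B → S → ℝ) (hP0 : ∀ x s', 0 ≤ P x s')
    (γ : ℝ) (hγ0 : 0 ≤ γ)
    (Qstar : S × A × B → ℝ)
    (α : ℝ) (hα : α ∈ Set.Ioo (0 : ℝ) 1)
    (d : S × A × B → ℝ) (hd : ∀ x, d x ∈ Set.Ioo (0 : ℝ) 1)
    (w : ℕ → S × A × B → ℝ)
    -- πstar s maximizes a ↦ min_b Qstar (s, a, b)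
    (πstar : S → A)
    -- μstar (s, a) minimizes b ↦ Qstar (s, a, b)
    (μstar : S × A → B)
    -- the lower comparison system
    (QL : ℕ → S × A × B → ℝ)
    -- ν k (s, a) minimizes b ↦ QL k (s, a, b) - Qstar (s, a, b)
    (ν : ℕ → S × A → B)
    (hν : ∀ k s a b,
      QL k (s, a, ν k (s, a)) - Qstar (s, a, ν k (s, a)) ≤ QL k (s, a, b) - Qstar (s, a, b))
    (hQL : ∀ k (x : S × A × B), QL (k + 1) x - Qstar x =
      (1 - α * d x) * (QL k x - Qstar x)
      + α * d x * γ * (∑ s' : S, P x s' *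
          (QL k (s', πstar s', ν k (s', πstar s'))
            - Qstar (s', πstar s', ν k (s', πstar s'))))
      + α * w k x)
    -- the lower-upper comparison system
    (QLU : ℕ → S × A × B → ℝ)
    (hQLU : ∀ k (x : S × A × B), QLU (k + 1) x - Qstar x =
      (1 - α * d x) * (QLU k x - Qstar x)
      + α * d x * γ * (∑ s' : S, P x s' *
          (QLU k (s', πstar s', μstar (s', πstar s'))
            - Qstar (s', πstar s', μstar (s', πstar s'))))
      + α * w k x)
    (h0 : ∀ x, QL 0 x ≤ QLU 0 x) :
    ∀ k x, QL k x ≤ QLU k x := by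
  intro k
  induction k with
  | zero => exact h0
  | succ k ih =>
    intro x
    have hαd0 : 0 ≤ α * d x := mul_nonneg hα.1.le (hd x).1.le
    have hαd1 : α * d x ≤ 1 := mul_le_one₀ hα.2.le (hd x).1.le (hd x).2.le
    have hnext : ∀ s', QL k (s', πstar s', ν k (s', πstar s'))
        - Qstar (s', πstar s', ν k (s', πstar s')) ≤
        QLU k (s', πstar s', μstar (s', πstar s')) - Qstar (s', πstar s', μstar (s', πstar s')) :=
      fun s' => (hν k s' (πstar s') _).trans (sub_le_sub_right (ih _) _)
    refine (sub_le_sub_iff_right (Qstar x)).1 ?_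
    rw [hQL, hQLU]
    exact relaxation_step_mono hαd0 hαd1 hγ0 (hP0 x) (sub_le_sub_right (ih x) _) hnext

theorem lower_upper_comparison_system_bounds_lower {S A B : Type*}
    [Fintype S] [Fintype A] [Fintype B] [Nonempty S] [Nonempty A] [Nonempty B]
    (P : S × A × B → S → ℝ) (hP0 : ∀ x s', 0 ≤ P x s') (hP1 : ∀ x, ∑ s' : S, P x s' = 1)
    (R : S × A × B → ℝ) (γ : ℝ) (hγ0 : 0 ≤ γ) (hγ1 : γ < 1)
    (Qstar : S × A × B → ℝ)
    (hQstar : ∀ x : S × A × B, Qstar x = R x + γ * ∑ s' : S, P x s' *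
      (Finset.univ.sup' Finset.univ_nonempty fun a' : A =>
        Finset.univ.inf' Finset.univ_nonempty fun b' : B => Qstar (s', a', b')))
    (α : ℝ) (hα : α ∈ Set.Ioo (0 : ℝ) 1)
    (d : S × A × B → ℝ) (hd : ∀ x, d x ∈ Set.Ioo (0 : ℝ) 1)
    (w : ℕ → S × A × B → ℝ)
    -- πstar s maximizes a ↦ min_b Qstar (s, a, b)
    (πstar : S → A)
    (hπstar : ∀ s a,
      (Finset.univ.inf' Finset.univ_nonempty fun b : B => Qstar (s, a, b)) ≤
        Finset.univ.inf' Finset.univ_nonempty fun b : B => Qstar (s, πstar s, b))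
    -- μstar (s, a) minimizes b ↦ Qstar (s, a, b)
    (μstar : S × A → B)
    (hμstar : ∀ s a b, Qstar (s, a, μstar (s, a)) ≤ Qstar (s, a, b))
    -- the lower comparison system
    (QL : ℕ → S × A × B → ℝ)
    -- ν k (s, a) minimizes b ↦ QL k (s, a, b) - Qstar (s, a, b)
    (ν : ℕ → S × A → B)
    (hν : ∀ k s a b,
      QL k (s, a, ν k (s, a)) - Qstar (s, a, ν k (s, a)) ≤ QL k (s, a, b) - Qstar (s, a, b))
    (hQL : ∀ k (x : S × A × B), QL (k + 1) x - Qstar x =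
      (1 - α * d x) * (QL k x - Qstar x)
      + α * d x * γ * (∑ s' : S, P x s' *
          (QL k (s', πstar s', ν k (s', πstar s'))
            - Qstar (s', πstar s', ν k (s', πstar s'))))
      + α * w k x)
    -- the lower-upper comparison system
    (QLU : ℕ → S × A × B → ℝ)
    (hQLU : ∀ k (x : S × A × B), QLU (k + 1) x - Qstar x =
      (1 - α * d x) * (QLU k x - Qstar x)
      + α * d x * γ * (∑ s' : S, P x s' *
          (QLU k (s', πstar s', μstar (s', πstar s'))
            - Qstar (s', πstar s', μstar (s', πstar s'))))
      + α * w k x)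
    (h0 : ∀ x, QL 0 x ≤ QLU 0 x) :
    ∀ k x, QL k x ≤ QLU k x :=
  lower_upper_comparison_system_bounds_lower_general P hP0 γ hγ0 Qstar α hα d hd w πstar μstar QL ν
    hν hQL QLU hQLU h0
end

section
/- Consider the upper comparison system (Q_k^U) and the upper-lower comparison system (Q_k^{UL}) driven by the same noise sequence (w_k). If Q_0^U(s,a,b) ≥ Q_0^{UL}(s,a,b) for all (s,a,b) ∈ S × A × B, then Q_k^U(s,a,b) ≥ Q_k^{UL}(s,a,b) for all k ≥ 0 and all (s,a,b) ∈ S × A × B. -/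
/-!
Both comparison systems are driven by the same noise, so their errors relative to `Q*` evolve by the
same affine step `e ↦ (1 - α d) e + α d γ P (e ∘ policy) + α w`, evaluated along `π*` for the
upper-lower system and along the greedy policy `τ_k` for the upper one. This step is monotone in `e`
(its coefficients are nonnegative since `α d ≤ 1`), and along the greedy policy it dominates the step
along any other policy. Hence `e^{UL}_k ≤ e^U_k` propagates by induction on `k`.
-/

section ComparisonStep

variable {ι S : Type*} [Fintype S]

def comparisonStep (c β : ι → ℝ) (P : ι → S → ℝ) (n : ι → ℝ) (g : S → ι) (e : ι → ℝ) :
    ι → ℝ :=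
  fun x => (1 - c x) * e x + β x * ∑ s, P x s * e (g s) + n x

variable {c β : ι → ℝ} {P : ι → S → ℝ}

theorem comparisonStep_mono (hc : ∀ x, c x ≤ 1) (hβ : ∀ x, 0 ≤ β x) (hP : ∀ x s, 0 ≤ P x s)
    (n : ι → ℝ) (g : S → ι) : Monotone (comparisonStep c β P n g) := by
  intro e e' he x
  have hc' : 0 ≤ 1 - c x := sub_nonneg.2 (hc x)
  have hsum : ∑ s, P x s * e (g s) ≤ ∑ s, P x s * e' (g s) :=
    Finset.sum_le_sum fun s _ => mul_le_mul_of_nonneg_left (he (g s)) (hP x s)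
  unfold comparisonStep
  gcongr
  · exact he x
  · exact hβ x

theorem comparisonStep_le_of_forall_le (hβ : ∀ x, 0 ≤ β x) (hP : ∀ x s, 0 ≤ P x s)
    (n : ι → ℝ) {g g' : S → ι} {e : ι → ℝ} (h : ∀ s, e (g s) ≤ e (g' s)) :
    comparisonStep c β P n g e ≤ comparisonStep c β P n g' e := by
  intro x
  have hsum : ∑ s, P x s * e (g s) ≤ ∑ s, P x s * e (g' s) :=
    Finset.sum_le_sum fun s _ => mul_le_mul_of_nonneg_left (h s) (hP x s)
  unfold comparisonStep
  gcongr
  exact hβ x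

theorem le_of_comparisonStep_of_greedy (hc : ∀ x, c x ≤ 1) (hβ : ∀ x, 0 ≤ β x)
    (hP : ∀ x s, 0 ≤ P x s) (n : ℕ → ι → ℝ) (g : S → ι) (g' : ℕ → S → ι)
    {e f : ℕ → ι → ℝ} (he : ∀ k, e (k + 1) = comparisonStep c β P (n k) g (e k))
    (hf : ∀ k, f (k + 1) = comparisonStep c β P (n k) (g' k) (f k))
    (hgreedy : ∀ k s, f k (g s) ≤ f k (g' k s)) (h0 : e 0 ≤ f 0) :
    ∀ k, e k ≤ f k := by
  intro k
  induction k with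
  | zero => exact h0
  | succ k ih =>
    calc e (k + 1) = comparisonStep c β P (n k) g (e k) := he k
      _ ≤ comparisonStep c β P (n k) g (f k) := comparisonStep_mono hc hβ hP _ _ ih
      _ ≤ comparisonStep c β P (n k) (g' k) (f k) :=
        comparisonStep_le_of_forall_le hβ hP _ (hgreedy k)
      _ = f (k + 1) := (hf k).symm

end ComparisonStep

theorem upper_lower_comparison_system_bounds_upper_general {S A B : Type*}
    [Fintype S] [Fintype A] [Fintype B]
    (P : S × A × B → S → ℝ) (hP0 : ∀ x s', 0 ≤ P x s')
    (γ : ℝ) (hγ0 : 0 ≤ γ)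
    (Qstar : S × A × B → ℝ)
    (α : ℝ) (hα : α ∈ Set.Ioo (0 : ℝ) 1)
    (d : S × A × B → ℝ) (hd : ∀ x, d x ∈ Set.Ioo (0 : ℝ) 1)
    (w : ℕ → S × A × B → ℝ)
    -- πstar s maximizes a ↦ min_b Qstar (s, a, b)
    (πstar : S → A)
    -- μstar (s, a) minimizes b ↦ Qstar (s, a, b)
    (μstar : S × A → B)
    -- the upper comparison system
    (QU : ℕ → S × A × B → ℝ)
    -- τ k s maximizes a ↦ QU k (s, a, μstar (s, a)) - Qstar (s, a, μstar (s, a))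
    (τ : ℕ → S → A)
    (hτ : ∀ k s a,
      QU k (s, a, μstar (s, a)) - Qstar (s, a, μstar (s, a)) ≤
        QU k (s, τ k s, μstar (s, τ k s)) - Qstar (s, τ k s, μstar (s, τ k s)))
    (hQU : ∀ k (x : S × A × B), QU (k + 1) x - Qstar x =
      (1 - α * d x) * (QU k x - Qstar x)
      + α * d x * γ * (∑ s' : S, P x s' *
          (QU k (s', τ k s', μstar (s', τ k s'))
            - Qstar (s', τ k s', μstar (s', τ k s'))))
      + α * w k x)
    -- the upper-lower comparison system
    (QUL : ℕ → S × A × B → ℝ)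
    (hQUL : ∀ k (x : S × A × B), QUL (k + 1) x - Qstar x =
      (1 - α * d x) * (QUL k x - Qstar x)
      + α * d x * γ * (∑ s' : S, P x s' *
          (QUL k (s', πstar s', μstar (s', πstar s'))
            - Qstar (s', πstar s', μstar (s', πstar s'))))
      + α * w k x)
    (h0 : ∀ x, QUL 0 x ≤ QU 0 x) :
    ∀ k x, QUL k x ≤ QU k x := by
  have hc : ∀ x, α * d x ≤ 1 := fun x =>
    mul_le_one₀ hα.2.le (hd x).1.le (hd x).2.le
  have hβ : ∀ x, 0 ≤ α * d x * γ := fun x =>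
    mul_nonneg (mul_nonneg hα.1.le (hd x).1.le) hγ0
  have herr := le_of_comparisonStep_of_greedy hc hβ hP0 (fun k x => α * w k x)
    (fun s => (s, πstar s, μstar (s, πstar s))) (fun k s => (s, τ k s, μstar (s, τ k s)))
    (e := fun k x => QUL k x - Qstar x) (f := fun k x => QU k x - Qstar x)
    (fun k => funext (hQUL k)) (fun k => funext (hQU k)) (fun k s => hτ k s (πstar s))
    (fun x => sub_le_sub_right (h0 x) _)
  exact fun k x => sub_le_sub_iff_right _ |>.1 (herr k x)

theorem upper_lower_comparison_system_bounds_upper {S A B : Type*}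
    [Fintype S] [Fintype A] [Fintype B] [Nonempty S] [Nonempty A] [Nonempty B]
    (P : S × A × B → S → ℝ) (hP0 : ∀ x s', 0 ≤ P x s') (hP1 : ∀ x, ∑ s' : S, P x s' = 1)
    (R : S × A × B → ℝ) (γ : ℝ) (hγ0 : 0 ≤ γ) (hγ1 : γ < 1)
    (Qstar : S × A × B → ℝ)
    (hQstar : ∀ x : S × A × B, Qstar x = R x + γ * ∑ s' : S, P x s' *
      (Finset.univ.sup' Finset.univ_nonempty fun a' : A =>
        Finset.univ.inf' Finset.univ_nonempty fun b' : B => Qstar (s', a', b')))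
    (α : ℝ) (hα : α ∈ Set.Ioo (0 : ℝ) 1)
    (d : S × A × B → ℝ) (hd : ∀ x, d x ∈ Set.Ioo (0 : ℝ) 1)
    (w : ℕ → S × A × B → ℝ)
    -- πstar s maximizes a ↦ min_b Qstar (s, a, b)
    (πstar : S → A)
    (hπstar : ∀ s a,
      (Finset.univ.inf' Finset.univ_nonempty fun b : B => Qstar (s, a, b)) ≤
        Finset.univ.inf' Finset.univ_nonempty fun b : B => Qstar (s, πstar s, b))
    -- μstar (s, a) minimizes b ↦ Qstar (s, a, b)
    (μstar : S × A → B)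
    (hμstar : ∀ s a b, Qstar (s, a, μstar (s, a)) ≤ Qstar (s, a, b))
    -- the upper comparison system
    (QU : ℕ → S × A × B → ℝ)
    -- τ k s maximizes a ↦ QU k (s, a, μstar (s, a)) - Qstar (s, a, μstar (s, a))
    (τ : ℕ → S → A)
    (hτ : ∀ k s a,
      QU k (s, a, μstar (s, a)) - Qstar (s, a, μstar (s, a)) ≤
        QU k (s, τ k s, μstar (s, τ k s)) - Qstar (s, τ k s, μstar (s, τ k s)))
    (hQU : ∀ k (x : S × A × B), QU (k + 1) x - Qstar x =
      (1 - α * d x) * (QU k x - Qstar x)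
      + α * d x * γ * (∑ s' : S, P x s' *
          (QU k (s', τ k s', μstar (s', τ k s'))
            - Qstar (s', τ k s', μstar (s', τ k s'))))
      + α * w k x)
    -- the upper-lower comparison system
    (QUL : ℕ → S × A × B → ℝ)
    (hQUL : ∀ k (x : S × A × B), QUL (k + 1) x - Qstar x =
      (1 - α * d x) * (QUL k x - Qstar x)
      + α * d x * γ * (∑ s' : S, P x s' *
          (QUL k (s', πstar s', μstar (s', πstar s'))
            - Qstar (s', πstar s', μstar (s', πstar s'))))
      + α * w k x)
    (h0 : ∀ x, QUL 0 x ≤ QU 0 x) :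
    ∀ k x, QUL k x ≤ QU k x :=
  upper_lower_comparison_system_bounds_upper_general P hP0 γ hγ0 Qstar α hα d hd w πstar μstar QU τ
    hτ hQU QUL hQUL h0
end

section
/- Let n be a nonempty finite index set with cardinality N, let ρ ∈ (0,1), α ∈ ℝ, W_max ≥ 0, and let A be an n × n real matrix with Σ_j |A_{ij}| ≤ ρ for every row i. Let x_0 ∈ ℝ^n and let (W_k)_{k≥0} be n × n real symmetric positive semidefinite matrices such that W_max·I − W_k is positive semidefinite for every k. Define the matrix recursion X_0 = x_0 x_0^T and X_{k+1} = A X_k A^T + α² W_k. Then for every k ≥ 0, trace(X_k) ≤ N² α² W_max / (1 − ρ) + N² · ‖x_0‖₂² · ρ^{2k}, where ‖x_0‖₂² = Σ_i x_0(i)². -/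
/-!
Measure matrices by the entrywise sup norm. The row-sum bound on `A` gives
`‖A B Aᵀ‖ ≤ ρ² ‖B‖`, and `0 ≤ W_k ≤ W_max I` gives `‖W_k‖ ≤ W_max`, so `e_k = ‖X_k‖` obeys
the affine recurrence `e_{k+1} ≤ ρ² e_k + α² W_max` with `e_0 ≤ ‖x_0‖₂²`. Unrolling it,
`e_k ≤ α² W_max / (1 - ρ²) + ‖x_0‖₂² ρ^{2k}`, and `trace X_k ≤ N e_k`.
-/

open Matrix Finset
open scoped Matrix.Norms.Elementwise

lemma le_div_one_sub_add_mul_pow_of_le_mul_add {e : ℕ → ℝ} {r d s : ℝ} (hr0 : 0 ≤ r)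
    (hr1 : r < 1) (hd : 0 ≤ d) (he0 : e 0 ≤ s) (he : ∀ k, e (k + 1) ≤ r * e k + d) (k : ℕ) :
    e k ≤ d / (1 - r) + s * r ^ k := by
  induction k with
  | zero =>
    have : 0 ≤ d / (1 - r) := div_nonneg hd (sub_nonneg.2 hr1.le)
    simpa using he0.trans (le_add_of_nonneg_left this)
  | succ k ih =>
    have hfix : r * (d / (1 - r)) + d = d / (1 - r) := by
      field_simp [(sub_pos.2 hr1).ne']; ring
    calc e (k + 1) ≤ r * e k + d := he k
      _ ≤ r * (d / (1 - r) + s * r ^ k) + d := by gcongr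
      _ = d / (1 - r) + s * r ^ (k + 1) := by linear_combination hfix

namespace Matrix

variable {l m n α : Type*} [Fintype l] [Fintype m] [Fintype n]

theorem PosSemidef.apply_add_apply_nonneg {M : Matrix n n ℝ} (hM : M.PosSemidef) (i j : n) :
    0 ≤ M i i + M i j + M j i + M j j := by
  classical
  have h := hM.dotProduct_mulVec_nonneg (Pi.single i 1 + Pi.single j 1)
  simp only [star_trivial, mulVec_add, add_dotProduct, dotProduct_add, mulVec_single,
    single_dotProduct, MulOpposite.op_one, col_apply, one_smul, one_mul] at h
  linarith

theorem PosSemidef.abs_apply_le [DecidableEq n] {M : Matrix n n ℝ} {c : ℝ} (hM : M.PosSemidef)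
    (hcM : (c • 1 - M).PosSemidef) (i j : n) : |M i j| ≤ c := by
  have hsymm : M j i = M i j := hM.isHermitian.apply i j
  have hdiag (p : n) : M p p ≤ c := by
    simpa [sub_nonneg] using hcM.diag_nonneg (i := p)
  have hlow := hM.apply_add_apply_nonneg i j
  have hup := hcM.apply_add_apply_nonneg i j
  rcases eq_or_ne i j with rfl | hij
  · exact abs_le.2 ⟨by linarith [hM.diag_nonneg (i := i), hdiag i], hdiag i⟩
  · simp only [sub_apply, smul_apply, one_apply_eq, one_apply_ne hij, one_apply_ne hij.symm,
      smul_eq_mul, mul_one, mul_zero, zero_sub] at hup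
    exact abs_le.2 ⟨by linarith [hdiag i, hdiag j],
      by linarith [hM.diag_nonneg (i := i), hM.diag_nonneg (i := j)]⟩

theorem norm_mul_le_of_sum_norm_le [NonUnitalSeminormedRing α] {A : Matrix l m α}
    (B : Matrix m n α) {ρ : ℝ} (hρ : 0 ≤ ρ) (hA : ∀ i, ∑ j, ‖A i j‖ ≤ ρ) :
    ‖A * B‖ ≤ ρ * ‖B‖ := by
  refine (norm_le_iff (mul_nonneg hρ (norm_nonneg B))).2 fun i k => ?_
  calc ‖(A * B) i k‖ ≤ ∑ j, ‖A i j‖ * ‖B j k‖ :=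
        (norm_sum_le _ _).trans (sum_le_sum fun j _ => norm_mul_le _ _)
    _ ≤ ∑ j, ‖A i j‖ * ‖B‖ := by gcongr; exact norm_entry_le_entrywise_sup_norm B
    _ ≤ ρ * ‖B‖ := by rw [← sum_mul]; gcongr; exact hA i

theorem norm_mul_mul_transpose_le [SeminormedCommRing α] {A : Matrix l n α}
    (B : Matrix n n α) {ρ : ℝ} (hρ : 0 ≤ ρ) (hA : ∀ i, ∑ j, ‖A i j‖ ≤ ρ) :
    ‖A * B * Aᵀ‖ ≤ ρ ^ 2 * ‖B‖ := by
  calc ‖A * B * Aᵀ‖ = ‖A * (A * B)ᵀ‖ := by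
        rw [← norm_transpose, transpose_mul, transpose_transpose]
    _ ≤ ρ * ‖A * B‖ := by
        rw [← norm_transpose (A * B)]; exact norm_mul_le_of_sum_norm_le _ hρ hA
    _ ≤ ρ * (ρ * ‖B‖) := by gcongr; exact norm_mul_le_of_sum_norm_le _ hρ hA
    _ = ρ ^ 2 * ‖B‖ := by ring

theorem norm_trace_le [SeminormedAddCommGroup α] (M : Matrix n n α) :
    ‖M.trace‖ ≤ Fintype.card n * ‖M‖ :=
  calc ‖M.trace‖ ≤ ∑ i, ‖M i i‖ := norm_sum_le _ _
    _ ≤ ∑ _i : n, ‖M‖ := sum_le_sum fun i _ => norm_entry_le_entrywise_sup_norm M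
    _ = Fintype.card n * ‖M‖ := by simp

theorem norm_vecMulVec_self_le (x : n → ℝ) : ‖vecMulVec x x‖ ≤ ∑ i, x i ^ 2 := by
  have hsq (p : n) : x p ^ 2 ≤ ∑ i, x i ^ 2 :=
    single_le_sum (fun i _ => sq_nonneg (x i)) (mem_univ p)
  refine (norm_le_iff (sum_nonneg fun i _ => sq_nonneg (x i))).2 fun p q => ?_
  rw [vecMulVec_apply, Real.norm_eq_abs, abs_mul]
  nlinarith [sq_abs (x p), sq_abs (x q), sq_nonneg (|x p| - |x q|), hsq p, hsq q]

end Matrix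

theorem autocorrelation_recursion_trace_bound_general {n : Type*} [Fintype n]
    [DecidableEq n]
    (ρ α Wmax : ℝ) (hρ : ρ ∈ Set.Ioo (0 : ℝ) 1) (hWmax : 0 ≤ Wmax)
    (A : Matrix n n ℝ) (hA : ∀ i, ∑ j, |A i j| ≤ ρ)
    (x0 : n → ℝ)
    (W : ℕ → Matrix n n ℝ)
    (hWpsd : ∀ k, (W k).PosSemidef)
    (hWle : ∀ k, (Wmax • (1 : Matrix n n ℝ) - W k).PosSemidef)
    (X : ℕ → Matrix n n ℝ)
    (hX0 : X 0 = Matrix.vecMulVec x0 x0)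
    (hX : ∀ k, X (k + 1) = A * X k * A.transpose + (α ^ 2) • W k) :
    ∀ k, (X k).trace ≤ (Fintype.card n : ℝ) ^ 2 * α ^ 2 * Wmax / (1 - ρ)
      + (Fintype.card n : ℝ) ^ 2 * (∑ i, x0 i ^ 2) * ρ ^ (2 * k) := by
  intro k
  obtain ⟨hρ0, hρ1⟩ := hρ
  set N : ℝ := (Fintype.card n : ℝ)
  set S : ℝ := ∑ i, x0 i ^ 2
  have hArow : ∀ i, ∑ j, ‖A i j‖ ≤ ρ := by simpa only [Real.norm_eq_abs] using hA
  have hstep (k : ℕ) : ‖X (k + 1)‖ ≤ ρ ^ 2 * ‖X k‖ + α ^ 2 * Wmax := by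
    have hW : ‖W k‖ ≤ Wmax :=
      (norm_le_iff hWmax).2 fun i j => (hWpsd k).abs_apply_le (hWle k) i j
    calc ‖X (k + 1)‖ ≤ ‖A * X k * Aᵀ‖ + ‖α ^ 2 • W k‖ := hX k ▸ norm_add_le _ _
      _ ≤ ρ ^ 2 * ‖X k‖ + α ^ 2 * Wmax := by
        rw [norm_smul, Real.norm_of_nonneg (sq_nonneg α)]
        gcongr
        exact norm_mul_mul_transpose_le _ hρ0.le hArow
  have hXk : ‖X k‖ ≤ α ^ 2 * Wmax / (1 - ρ ^ 2) + S * ρ ^ (2 * k) := by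
    rw [pow_mul]
    exact le_div_one_sub_add_mul_pow_of_le_mul_add (e := fun k => ‖X k‖) (sq_nonneg ρ)
      (by nlinarith) (by positivity) (hX0 ▸ norm_vecMulVec_self_le x0) hstep k
  have hN : N ≤ N ^ 2 := by
    simp only [N]; exact_mod_cast Nat.le_self_pow two_ne_zero (Fintype.card n)
  calc (X k).trace ≤ N * ‖X k‖ := (le_abs_self _).trans (norm_trace_le (X k))
    _ ≤ N * (α ^ 2 * Wmax / (1 - ρ) + S * ρ ^ (2 * k)) := by
      refine mul_le_mul_of_nonneg_left (hXk.trans ?_) (Nat.cast_nonneg _)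
      gcongr
      nlinarith
    _ ≤ N ^ 2 * (α ^ 2 * Wmax / (1 - ρ) + S * ρ ^ (2 * k)) := by gcongr
    _ = N ^ 2 * α ^ 2 * Wmax / (1 - ρ) + N ^ 2 * S * ρ ^ (2 * k) := by ring

theorem autocorrelation_recursion_trace_bound {n : Type*} [Fintype n] [Nonempty n]
    [DecidableEq n]
    (ρ α Wmax : ℝ) (hρ : ρ ∈ Set.Ioo (0 : ℝ) 1) (hWmax : 0 ≤ Wmax)
    (A : Matrix n n ℝ) (hA : ∀ i, ∑ j, |A i j| ≤ ρ)
    (x0 : n → ℝ)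
    (W : ℕ → Matrix n n ℝ)
    (hWpsd : ∀ k, (W k).PosSemidef)
    (hWle : ∀ k, (Wmax • (1 : Matrix n n ℝ) - W k).PosSemidef)
    (X : ℕ → Matrix n n ℝ)
    (hX0 : X 0 = Matrix.vecMulVec x0 x0)
    (hX : ∀ k, X (k + 1) = A * X k * A.transpose + (α ^ 2) • W k) :
    ∀ k, (X k).trace ≤ (Fintype.card n : ℝ) ^ 2 * α ^ 2 * Wmax / (1 - ρ)
      + (Fintype.card n : ℝ) ^ 2 * (∑ i, x0 i ^ 2) * ρ ^ (2 * k) :=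
  autocorrelation_recursion_trace_bound_general ρ α Wmax hρ hWmax A hA x0 W hWpsd hWle X hX0 hX
end

section
/- Consider the lower comparison system (Q_k^L) and the lower-upper comparison system (Q_k^{LU}) driven by the same noise sequence (w_k). Let d_min := min_{(s,a,b)} d(s,a,b), d_max := max_{(s,a,b)} d(s,a,b), and ρ := 1 − α d_min (1 − γ). Then for every k ≥ 0, ‖Q_{k+1}^L − Q_{k+1}^{LU}‖_∞ ≤ ρ · ‖Q_k^L − Q_k^{LU}‖_∞ + 2 α γ d_max · ‖Q_k^{LU} − Q*‖_∞, where ‖Q‖_∞ = max_{(s,a,b)∈S×A×B} |Q(s,a,b)|. -/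
/-!
Subtracting the two recursions cancels the noise and leaves
`(1 - α d) (QL - QLU) + α d γ · P D`, where `D s'` compares the lower error at the action
`ν_k` with the lower-upper error at `μ*`. Since `ν_k` minimizes the lower error, moving it to
`μ*` only increases it, so `D ≤ ‖QL - QLU‖`; splitting off `QLU - Q*` at both actions gives
`D ≥ -‖QL - QLU‖ - 2 ‖QLU - Q*‖`. Averaging over `P` and the relaxation step then yield the bound.
-/

section SupNorm

variable {X : Type*} [Fintype X]

lemma abs_apply_le_norm (f : X → ℝ) (y : X) : |f y| ≤ ‖f‖ := by
  simpa only [Real.norm_eq_abs] using norm_le_pi_norm f y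

lemma abs_sub_le_norm_sub_add_two_mul_norm (f g : X → ℝ) {y₁ y₂ : X} (h : f y₁ ≤ f y₂) :
    |f y₁ - g y₂| ≤ ‖f - g‖ + 2 * ‖g‖ := by
  have hfg₁ := abs_le.mp (abs_apply_le_norm (f - g) y₁)
  have hfg₂ := abs_le.mp (abs_apply_le_norm (f - g) y₂)
  have hg₁ := abs_le.mp (abs_apply_le_norm g y₁)
  have hg₂ := abs_le.mp (abs_apply_le_norm g y₂)
  have hg : 0 ≤ ‖g‖ := norm_nonneg g
  simp only [Pi.sub_apply] at hfg₁ hfg₂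
  rw [abs_le]
  constructor <;> linarith

end SupNorm

lemma abs_sum_mul_le_of_stochastic {S : Type*} [Fintype S] {p D : S → ℝ} {C : ℝ}
    (hp0 : ∀ s, 0 ≤ p s) (hp1 : ∑ s, p s = 1) (hD : ∀ s, |D s| ≤ C) :
    |∑ s, p s * D s| ≤ C :=
  calc |∑ s, p s * D s| ≤ ∑ s, |p s * D s| := Finset.abs_sum_le_sum_abs _ _
    _ ≤ ∑ s, p s * C := by
        gcongr with s
        rw [abs_mul, abs_of_nonneg (hp0 s)]
        exact mul_le_mul_of_nonneg_left (hD s) (hp0 s)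
    _ = C := by rw [← Finset.sum_mul, hp1, one_mul]

lemma abs_relaxation_le {t tmin tmax γ u m E U : ℝ} (ht0 : 0 ≤ t) (ht1 : t ≤ 1)
    (htmin : tmin ≤ t) (htmax : t ≤ tmax) (hγ0 : 0 ≤ γ) (hγ1 : γ ≤ 1)
    (hu : |u| ≤ E) (hm : |m| ≤ E + 2 * U) (hU : 0 ≤ U) :
    |(1 - t) * u + t * γ * m| ≤ (1 - tmin * (1 - γ)) * E + 2 * tmax * γ * U := by
  have hE : 0 ≤ E := (abs_nonneg u).trans hu
  have htγ : 0 ≤ t * γ := mul_nonneg ht0 hγ0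
  calc |(1 - t) * u + t * γ * m| ≤ (1 - t) * E + t * γ * (E + 2 * U) := by
        refine (abs_add_le _ _).trans ?_
        rw [abs_mul, abs_mul, abs_of_nonneg (sub_nonneg.mpr ht1), abs_of_nonneg htγ]
        gcongr
    _ = (1 - t * (1 - γ)) * E + 2 * t * γ * U := by ring
    _ ≤ (1 - tmin * (1 - γ)) * E + 2 * tmax * γ * U := by gcongr

theorem lower_error_system_one_step_bound_general {S A B : Type*}
    [Fintype S] [Fintype A] [Fintype B] [Nonempty S] [Nonempty A] [Nonempty B]
    (P : S × A × B → S → ℝ) (hP0 : ∀ x s', 0 ≤ P x s') (hP1 : ∀ x, ∑ s' : S, P x s' = 1)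
    (γ : ℝ) (hγ0 : 0 ≤ γ) (hγ1 : γ < 1)
    (Qstar : S × A × B → ℝ)
    (α : ℝ) (hα : α ∈ Set.Ioo (0 : ℝ) 1)
    (d : S × A × B → ℝ) (hd : ∀ x, d x ∈ Set.Ioo (0 : ℝ) 1)
    (w : ℕ → S × A × B → ℝ)
    -- πstar s maximizes a ↦ min_b Qstar (s, a, b)
    (πstar : S → A)
    -- μstar (s, a) minimizes b ↦ Qstar (s, a, b)
    (μstar : S × A → B)
    -- the lower comparison system
    (QL : ℕ → S × A × B → ℝ)
    -- ν k (s, a) minimizes b ↦ QL k (s, a, b) - Qstar (s, a, b)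
    (ν : ℕ → S × A → B)
    (hν : ∀ k s a b,
      QL k (s, a, ν k (s, a)) - Qstar (s, a, ν k (s, a)) ≤ QL k (s, a, b) - Qstar (s, a, b))
    (hQL : ∀ k (x : S × A × B), QL (k + 1) x - Qstar x =
      (1 - α * d x) * (QL k x - Qstar x)
      + α * d x * γ * (∑ s' : S, P x s' *
          (QL k (s', πstar s', ν k (s', πstar s'))
            - Qstar (s', πstar s', ν k (s', πstar s'))))
      + α * w k x)
    -- the lower-upper comparison system
    (QLU : ℕ → S × A × B → ℝ)
    (hQLU : ∀ k (x : S × A × B), QLU (k + 1) x - Qstar x =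
      (1 - α * d x) * (QLU k x - Qstar x)
      + α * d x * γ * (∑ s' : S, P x s' *
          (QLU k (s', πstar s', μstar (s', πstar s'))
            - Qstar (s', πstar s', μstar (s', πstar s'))))
      + α * w k x) :
    ∀ k, ‖QL (k + 1) - QLU (k + 1)‖ ≤
      (1 - α * (Finset.univ.inf' Finset.univ_nonempty d) * (1 - γ)) * ‖QL k - QLU k‖
      + 2 * α * γ * (Finset.univ.sup' Finset.univ_nonempty d) * ‖QLU k - Qstar‖ := by
  intro k
  obtain ⟨hα0, hα1⟩ := hα
  set eL := QL k - Qstar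
  set eU := QLU k - Qstar
  have heLU : eL - eU = QL k - QLU k := sub_sub_sub_cancel_right _ _ _
  refine (pi_norm_le_iff_of_nonempty _).mpr fun x => ?_
  have hdiff : QL (k + 1) x - QLU (k + 1) x = (1 - α * d x) * (QL k x - QLU k x)
      + α * d x * γ * ∑ s', P x s' *
        (eL (s', πstar s', ν k (s', πstar s')) - eU (s', πstar s', μstar (s', πstar s'))) := by
    have hL := hQL k x
    have hLU := hQLU k x
    simp only [eL, eU, Pi.sub_apply, mul_sub, Finset.sum_sub_distrib] at hL hLU ⊢
    linear_combination hL - hLU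
  have hmix : |∑ s', P x s' *
      (eL (s', πstar s', ν k (s', πstar s')) - eU (s', πstar s', μstar (s', πstar s')))|
      ≤ ‖QL k - QLU k‖ + 2 * ‖eU‖ :=
    abs_sum_mul_le_of_stochastic (hP0 x) (hP1 x) fun s' =>
      heLU ▸ abs_sub_le_norm_sub_add_two_mul_norm eL eU (hν k s' (πstar s') _)
  rw [Real.norm_eq_abs, Pi.sub_apply, hdiff]
  refine (abs_relaxation_le (mul_nonneg hα0.le (hd x).1.le)
    (mul_le_one₀ hα1.le (hd x).1.le (hd x).2.le)
    (mul_le_mul_of_nonneg_left (Finset.inf'_le d (Finset.mem_univ x)) hα0.le)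
    (mul_le_mul_of_nonneg_left (Finset.le_sup' d (Finset.mem_univ x)) hα0.le)
    hγ0 hγ1.le (abs_apply_le_norm (QL k - QLU k) x) hmix (norm_nonneg eU)).trans_eq ?_
  ring

theorem lower_error_system_one_step_bound {S A B : Type*}
    [Fintype S] [Fintype A] [Fintype B] [Nonempty S] [Nonempty A] [Nonempty B]
    (P : S × A × B → S → ℝ) (hP0 : ∀ x s', 0 ≤ P x s') (hP1 : ∀ x, ∑ s' : S, P x s' = 1)
    (R : S × A × B → ℝ) (γ : ℝ) (hγ0 : 0 ≤ γ) (hγ1 : γ < 1)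
    (Qstar : S × A × B → ℝ)
    (hQstar : ∀ x : S × A × B, Qstar x = R x + γ * ∑ s' : S, P x s' *
      (Finset.univ.sup' Finset.univ_nonempty fun a' : A =>
        Finset.univ.inf' Finset.univ_nonempty fun b' : B => Qstar (s', a', b')))
    (α : ℝ) (hα : α ∈ Set.Ioo (0 : ℝ) 1)
    (d : S × A × B → ℝ) (hd : ∀ x, d x ∈ Set.Ioo (0 : ℝ) 1)
    (w : ℕ → S × A × B → ℝ)
    -- πstar s maximizes a ↦ min_b Qstar (s, a, b)
    (πstar : S → A)
    (hπstar : ∀ s a,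
      (Finset.univ.inf' Finset.univ_nonempty fun b : B => Qstar (s, a, b)) ≤
        Finset.univ.inf' Finset.univ_nonempty fun b : B => Qstar (s, πstar s, b))
    -- μstar (s, a) minimizes b ↦ Qstar (s, a, b)
    (μstar : S × A → B)
    (hμstar : ∀ s a b, Qstar (s, a, μstar (s, a)) ≤ Qstar (s, a, b))
    -- the lower comparison system
    (QL : ℕ → S × A × B → ℝ)
    -- ν k (s, a) minimizes b ↦ QL k (s, a, b) - Qstar (s, a, b)
    (ν : ℕ → S × A → B)
    (hν : ∀ k s a b,
      QL k (s, a, ν k (s, a)) - Qstar (s, a, ν k (s, a)) ≤ QL k (s, a, b) - Qstar (s, a, b))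
    (hQL : ∀ k (x : S × A × B), QL (k + 1) x - Qstar x =
      (1 - α * d x) * (QL k x - Qstar x)
      + α * d x * γ * (∑ s' : S, P x s' *
          (QL k (s', πstar s', ν k (s', πstar s'))
            - Qstar (s', πstar s', ν k (s', πstar s'))))
      + α * w k x)
    -- the lower-upper comparison system
    (QLU : ℕ → S × A × B → ℝ)
    (hQLU : ∀ k (x : S × A × B), QLU (k + 1) x - Qstar x =
      (1 - α * d x) * (QLU k x - Qstar x)
      + α * d x * γ * (∑ s' : S, P x s' *
          (QLU k (s', πstar s', μstar (s', πstar s'))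
            - Qstar (s', πstar s', μstar (s', πstar s'))))
      + α * w k x) :
    ∀ k, ‖QL (k + 1) - QLU (k + 1)‖ ≤
      (1 - α * (Finset.univ.inf' Finset.univ_nonempty d) * (1 - γ)) * ‖QL k - QLU k‖
      + 2 * α * γ * (Finset.univ.sup' Finset.univ_nonempty d) * ‖QLU k - Qstar‖ :=
  lower_error_system_one_step_bound_general P hP0 hP1 γ hγ0 hγ1 Qstar α hα d hd w πstar μstar QL ν
    hν hQL QLU hQLU
end

section
/- Consider the upper comparison system (Q_k^U) and the upper-lower comparison system (Q_k^{UL}) driven by the same noise sequence (w_k). Let d_min := min_{(s,a,b)} d(s,a,b), d_max := max_{(s,a,b)} d(s,a,b), and ρ := 1 − α d_min (1 − γ). Then for every k ≥ 0, ‖Q_{k+1}^U − Q_{k+1}^{UL}‖_∞ ≤ ρ · ‖Q_k^U − Q_k^{UL}‖_∞ + 2 α γ d_max · ‖Q_k^{UL} − Q*‖_∞, where ‖Q‖_∞ = max_{(s,a,b)∈S×A×B} |Q(s,a,b)|. -/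
/-!
Subtracting the two recursions, the difference at step `k + 1` is a damped copy of the
difference at step `k` plus `α d γ` times a `P`-average of the gaps
`(Q^U_k - Q*)(s', τ_k s', ·) - (Q^{UL}_k - Q*)(s', π* s', ·)`. Because `τ_k` is greedy for the
upper error, each gap is at least `-‖Q^U_k - Q^{UL}_k‖`; passing through the action `τ_k s'`
shows it is at most `‖Q^U_k - Q^{UL}_k‖ + 2 ‖Q^{UL}_k - Q*‖`.
-/

open Finset

lemma abs_sum_mul_le_of_stochastic_s15 {ι : Type*} [Fintype ι] {p f : ι → ℝ} {c : ℝ}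
    (hp0 : ∀ i, 0 ≤ p i) (hp1 : ∑ i, p i = 1) (hf : ∀ i, |f i| ≤ c) :
    |∑ i, p i * f i| ≤ c :=
  calc |∑ i, p i * f i| ≤ ∑ i, |p i * f i| := abs_sum_le_sum_abs _ _
    _ ≤ ∑ i, p i * c := by
      gcongr with i
      rw [abs_mul, abs_of_nonneg (hp0 i)]
      exact mul_le_mul_of_nonneg_left (hf i) (hp0 i)
    _ = c := by rw [← sum_mul, hp1, one_mul]

lemma abs_sub_le_of_le_of_abs_sub_le {x₀ x₁ y₀ y₁ N L : ℝ} (hx : x₁ ≤ x₀)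
    (h₀ : |x₀ - y₀| ≤ N) (h₁ : |x₁ - y₁| ≤ N) (hy₀ : |y₀| ≤ L) (hy₁ : |y₁| ≤ L) :
    |x₀ - y₁| ≤ N + 2 * L := by
  rw [abs_le] at *
  constructor <;> linarith

lemma abs_damped_average_step_le {ι : Type*} [Fintype ι] {p g : ι → ℝ}
    {α δ γ e N L : ℝ} (hp0 : ∀ i, 0 ≤ p i) (hp1 : ∑ i, p i = 1)
    (hα : 0 ≤ α) (hδ : 0 ≤ δ) (hαδ : α * δ ≤ 1) (hγ : 0 ≤ γ)
    (he : |e| ≤ N) (hg : ∀ i, |g i| ≤ N + 2 * L) :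
    |(1 - α * δ) * e + α * δ * γ * ∑ i, p i * g i| ≤
      (1 - α * δ * (1 - γ)) * N + 2 * α * γ * δ * L := by
  have hsum := abs_sum_mul_le_of_stochastic_s15 hp0 hp1 hg
  have hdamp : 0 ≤ 1 - α * δ := sub_nonneg.2 hαδ
  have hgain : 0 ≤ α * δ * γ := by positivity
  calc |(1 - α * δ) * e + α * δ * γ * ∑ i, p i * g i|
      ≤ |(1 - α * δ) * e| + |α * δ * γ * ∑ i, p i * g i| := abs_add_le _ _
    _ = (1 - α * δ) * |e| + α * δ * γ * |∑ i, p i * g i| := by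
      rw [abs_mul, abs_mul, abs_of_nonneg hdamp, abs_of_nonneg hgain]
    _ ≤ (1 - α * δ) * N + α * δ * γ * (N + 2 * L) := by gcongr
    _ = (1 - α * δ * (1 - γ)) * N + 2 * α * γ * δ * L := by ring

theorem upper_error_system_one_step_bound_general {S A B : Type*}
    [Fintype S] [Fintype A] [Fintype B] [Nonempty S] [Nonempty A] [Nonempty B]
    (P : S × A × B → S → ℝ) (hP0 : ∀ x s', 0 ≤ P x s') (hP1 : ∀ x, ∑ s' : S, P x s' = 1)
    (γ : ℝ) (hγ0 : 0 ≤ γ) (hγ1 : γ < 1)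
    (Qstar : S × A × B → ℝ)
    (α : ℝ) (hα : α ∈ Set.Ioo (0 : ℝ) 1)
    (d : S × A × B → ℝ) (hd : ∀ x, d x ∈ Set.Ioo (0 : ℝ) 1)
    (w : ℕ → S × A × B → ℝ)
    -- πstar s maximizes a ↦ min_b Qstar (s, a, b)
    (πstar : S → A)
    -- μstar (s, a) minimizes b ↦ Qstar (s, a, b)
    (μstar : S × A → B)
    -- the upper comparison system
    (QU : ℕ → S × A × B → ℝ)
    -- τ k s maximizes a ↦ QU k (s, a, μstar (s, a)) - Qstar (s, a, μstar (s, a))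
    (τ : ℕ → S → A)
    (hτ : ∀ k s a,
      QU k (s, a, μstar (s, a)) - Qstar (s, a, μstar (s, a)) ≤
        QU k (s, τ k s, μstar (s, τ k s)) - Qstar (s, τ k s, μstar (s, τ k s)))
    (hQU : ∀ k (x : S × A × B), QU (k + 1) x - Qstar x =
      (1 - α * d x) * (QU k x - Qstar x)
      + α * d x * γ * (∑ s' : S, P x s' *
          (QU k (s', τ k s', μstar (s', τ k s'))
            - Qstar (s', τ k s', μstar (s', τ k s'))))
      + α * w k x)
    -- the upper-lower comparison system
    (QUL : ℕ → S × A × B → ℝ)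
    (hQUL : ∀ k (x : S × A × B), QUL (k + 1) x - Qstar x =
      (1 - α * d x) * (QUL k x - Qstar x)
      + α * d x * γ * (∑ s' : S, P x s' *
          (QUL k (s', πstar s', μstar (s', πstar s'))
            - Qstar (s', πstar s', μstar (s', πstar s'))))
      + α * w k x) :
    ∀ k, ‖QU (k + 1) - QUL (k + 1)‖ ≤
      (1 - α * (Finset.univ.inf' Finset.univ_nonempty d) * (1 - γ)) * ‖QU k - QUL k‖
      + 2 * α * γ * (Finset.univ.sup' Finset.univ_nonempty d) * ‖QUL k - Qstar‖ := by
  intro k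
  have hN (z : S × A × B) : |(QU k z - Qstar z) - (QUL k z - Qstar z)| ≤ ‖QU k - QUL k‖ := by
    simpa using norm_le_pi_norm (QU k - QUL k) z
  have hL (z : S × A × B) : |QUL k z - Qstar z| ≤ ‖QUL k - Qstar‖ := by
    simpa using norm_le_pi_norm (QUL k - Qstar) z
  have hgap (s' : S) := abs_sub_le_of_le_of_abs_sub_le (hτ k s' (πstar s'))
    (hN (s', τ k s', _)) (hN (s', πstar s', _)) (hL (s', τ k s', _)) (hL (s', πstar s', _))
  refine (pi_norm_le_iff_of_nonempty _).2 fun x => ?_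
  rw [Real.norm_eq_abs, Pi.sub_apply]
  refine (le_of_eq ?_).trans ((abs_damped_average_step_le (hP0 x) (hP1 x) hα.1.le (hd x).1.le
    (mul_le_one₀ hα.2.le (hd x).1.le (hd x).2.le) hγ0 (hN x) hgap).trans ?_)
  · congr 1
    rw [← sub_sub_sub_cancel_right _ _ (Qstar x), hQU, hQUL]
    simp only [mul_sub, sum_sub_distrib]
    ring
  · have hα0 : 0 ≤ α := hα.1.le
    have hγ1' : γ ≤ 1 := hγ1.le
    gcongr
    · exact inf'_le _ (mem_univ x)
    · exact le_sup' _ (mem_univ x)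

theorem upper_error_system_one_step_bound {S A B : Type*}
    [Fintype S] [Fintype A] [Fintype B] [Nonempty S] [Nonempty A] [Nonempty B]
    (P : S × A × B → S → ℝ) (hP0 : ∀ x s', 0 ≤ P x s') (hP1 : ∀ x, ∑ s' : S, P x s' = 1)
    (R : S × A × B → ℝ) (γ : ℝ) (hγ0 : 0 ≤ γ) (hγ1 : γ < 1)
    (Qstar : S × A × B → ℝ)
    (hQstar : ∀ x : S × A × B, Qstar x = R x + γ * ∑ s' : S, P x s' *
      (Finset.univ.sup' Finset.univ_nonempty fun a' : A =>
        Finset.univ.inf' Finset.univ_nonempty fun b' : B => Qstar (s', a', b')))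
    (α : ℝ) (hα : α ∈ Set.Ioo (0 : ℝ) 1)
    (d : S × A × B → ℝ) (hd : ∀ x, d x ∈ Set.Ioo (0 : ℝ) 1)
    (w : ℕ → S × A × B → ℝ)
    -- πstar s maximizes a ↦ min_b Qstar (s, a, b)
    (πstar : S → A)
    (hπstar : ∀ s a,
      (Finset.univ.inf' Finset.univ_nonempty fun b : B => Qstar (s, a, b)) ≤
        Finset.univ.inf' Finset.univ_nonempty fun b : B => Qstar (s, πstar s, b))
    -- μstar (s, a) minimizes b ↦ Qstar (s, a, b)
    (μstar : S × A → B)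
    (hμstar : ∀ s a b, Qstar (s, a, μstar (s, a)) ≤ Qstar (s, a, b))
    -- the upper comparison system
    (QU : ℕ → S × A × B → ℝ)
    -- τ k s maximizes a ↦ QU k (s, a, μstar (s, a)) - Qstar (s, a, μstar (s, a))
    (τ : ℕ → S → A)
    (hτ : ∀ k s a,
      QU k (s, a, μstar (s, a)) - Qstar (s, a, μstar (s, a)) ≤
        QU k (s, τ k s, μstar (s, τ k s)) - Qstar (s, τ k s, μstar (s, τ k s)))
    (hQU : ∀ k (x : S × A × B), QU (k + 1) x - Qstar x =
      (1 - α * d x) * (QU k x - Qstar x)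
      + α * d x * γ * (∑ s' : S, P x s' *
          (QU k (s', τ k s', μstar (s', τ k s'))
            - Qstar (s', τ k s', μstar (s', τ k s'))))
      + α * w k x)
    -- the upper-lower comparison system
    (QUL : ℕ → S × A × B → ℝ)
    (hQUL : ∀ k (x : S × A × B), QUL (k + 1) x - Qstar x =
      (1 - α * d x) * (QUL k x - Qstar x)
      + α * d x * γ * (∑ s' : S, P x s' *
          (QUL k (s', πstar s', μstar (s', πstar s'))
            - Qstar (s', πstar s', μstar (s', πstar s'))))
      + α * w k x) :
    ∀ k, ‖QU (k + 1) - QUL (k + 1)‖ ≤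
      (1 - α * (Finset.univ.inf' Finset.univ_nonempty d) * (1 - γ)) * ‖QU k - QUL k‖
      + 2 * α * γ * (Finset.univ.sup' Finset.univ_nonempty d) * ‖QUL k - Qstar‖ :=
  upper_error_system_one_step_bound_general P hP0 hP1 γ hγ0 hγ1 Qstar α hα d hd w πstar μstar QU τ
    hτ hQU QUL hQUL
end

section
/- Let ρ ∈ (0,1), c ≥ 0, C ≥ 0, and let (e_k)_{k≥0} be a real sequence with e_0 = 0 and e_{i+1} ≤ ρ · e_i + c + C · ρ^i for all i ≥ 0. Then for every k ≥ 1, e_k ≤ c / (1 − ρ) + C · k · ρ^{k−1}. -/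
/-!
The bound `b k = c / (1 - ρ) + C k ρ^(k-1)` solves the recursion with equality:
`c / (1 - ρ)` is the fixed point of `x ↦ ρ x + c`, and `k ρ^(k-1)` absorbs the forcing term
`C ρ^k` since `(k + 1) ρ^k = ρ · k ρ^(k-1) + ρ^k`. As `ρ ≥ 0`, the affine step is monotone,
so `e k ≤ b k` follows by induction from `e 0 = 0 ≤ b 0`.
-/

lemma le_of_affine_recurrence {ρ : ℝ} {e b f : ℕ → ℝ} (hρ : 0 ≤ ρ) (h0 : e 0 ≤ b 0)
    (he : ∀ i, e (i + 1) ≤ ρ * e i + f i) (hb : ∀ i, ρ * b i + f i ≤ b (i + 1)) :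
    ∀ k, e k ≤ b k
  | 0 => h0
  | k + 1 => calc
      e (k + 1) ≤ ρ * e k + f k := he k
      _ ≤ ρ * b k + f k := by gcongr; exact le_of_affine_recurrence hρ h0 he hb k
      _ ≤ b (k + 1) := hb k

/-- Truncated subtraction makes `k - 1 = 0` at `k = 0`, where the factor `k` vanishes. -/
lemma mul_natCast_mul_pow_pred {R : Type*} [CommSemiring R] (a : R) (k : ℕ) :
    a * (k * a ^ (k - 1)) = k * a ^ k := by
  cases k with
  | zero => simp
  | succ k => simp only [Nat.add_sub_cancel, pow_succ]; ring

lemma geometric_bound_succ {ρ : ℝ} (hρ : ρ ≠ 1) (c C : ℝ) (k : ℕ) :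
    ρ * (c / (1 - ρ) + C * k * ρ ^ (k - 1)) + c + C * ρ ^ k
      = c / (1 - ρ) + C * ↑(k + 1) * ρ ^ (k + 1 - 1) := by
  have h1ρ : 1 - ρ ≠ 0 := sub_ne_zero.mpr hρ.symm
  have hfix : ρ * (c / (1 - ρ)) + c = c / (1 - ρ) := by field_simp; ring
  have hpow := mul_natCast_mul_pow_pred ρ k
  rw [Nat.add_sub_cancel]
  push_cast
  linear_combination hfix + C * hpow

theorem recursive_error_sequence_bound_general (ρ c C : ℝ) (hρ : ρ ∈ Set.Ioo (0 : ℝ) 1)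
    (hc : 0 ≤ c)
    (e : ℕ → ℝ) (h0 : e 0 = 0)
    (hrec : ∀ i, e (i + 1) ≤ ρ * e i + c + C * ρ ^ i) :
    ∀ k, 1 ≤ k → e k ≤ c / (1 - ρ) + C * k * ρ ^ (k - 1) := by
  obtain ⟨hρ0, hρ1⟩ := hρ
  intro k _
  refine le_of_affine_recurrence (b := fun k : ℕ => c / (1 - ρ) + C * k * ρ ^ (k - 1))
    (f := fun i => c + C * ρ ^ i) hρ0.le ?_ (fun i => by simpa only [add_assoc] using hrec i)
    (fun i => ?_) k
  · simpa [h0] using div_nonneg hc (sub_nonneg.mpr hρ1.le)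
  · rw [← add_assoc, geometric_bound_succ hρ1.ne]

theorem recursive_error_sequence_bound (ρ c C : ℝ) (hρ : ρ ∈ Set.Ioo (0 : ℝ) 1)
    (hc : 0 ≤ c) (hC : 0 ≤ C)
    (e : ℕ → ℝ) (h0 : e 0 = 0)
    (hrec : ∀ i, e (i + 1) ≤ ρ * e i + c + C * ρ ^ i) :
    ∀ k, 1 ≤ k → e k ≤ c / (1 - ρ) + C * k * ρ ^ (k - 1) :=
  recursive_error_sequence_bound_general ρ c C hρ hc e h0 hrec
end
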